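/- Let 2 ≤ j ≤ m, let i ∈ {1,…,n} be such that at least one δ-partial occurrence of length j ending at i exists, and let d ∈ ℕ satisfy M(j, i) ≤ d. Then there exists a position r < i such that gmin_{j−1} ≤ i − r − 1 ≤ gmax_{j−1}, at least one δ-partial occurrence of length j−1 ending at r exists, and M(j−1, r) ≤ d − |s_i − p_j|. (This is the inductive step guaranteeing that a full path within the distance budget can be traced from a leaf back to a root by always choosing a suitable parent, without backtracking.) -/
import Mathlib


/-- The γ-distance of the length-`j` prefix of the tuple `l` against the
pattern prefix `p₁ … p_j`: `∑_{k=1}^{j} |s_(l k) − p k|`. -/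
def gammaDist (s p : ℕ → ℤ) (j : ℕ) (l : ℕ → ℕ) : ℤ :=
  ∑ k ∈ Finset.Icc 1 j, |s (l k) - p k|

/-- `l` (restricted to indices `1,…,j`) is a δ-partial occurrence of length `j`
ending at `i`: indices in `{1,…,n}`, strictly increasing, `l j = i`, the gap
constraints hold, and `|s_(l k) − p k| ≤ δ` for all `1 ≤ k ≤ j`. -/
def IsPartialOcc (n : ℕ) (s p : ℕ → ℤ) (gmin gmax : ℕ → ℕ) (δ : ℕ)
    (j i : ℕ) (l : ℕ → ℕ) : Prop :=
  (∀ k, 1 ≤ k → k ≤ j → 1 ≤ l k ∧ l k ≤ n) ∧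
  (∀ k, 1 ≤ k → k < j → l k < l (k + 1)) ∧
  l j = i ∧
  (∀ k, 1 ≤ k → k < j →
    (gmin k : ℤ) ≤ (l (k + 1) : ℤ) - (l k : ℤ) - 1 ∧
    (l (k + 1) : ℤ) - (l k : ℤ) - 1 ≤ (gmax k : ℤ)) ∧
  (∀ k, 1 ≤ k → k ≤ j → |s (l k) - p k| ≤ (δ : ℤ))

/-- The minimal root distance `M(j, i)`: the minimum of the γ-distances of all
δ-partial occurrences of length `j` ending at `i`. -/
noncomputable def Mrd (n : ℕ) (s p : ℕ → ℤ) (gmin gmax : ℕ → ℕ) (δ : ℕ)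
    (j i : ℕ) : ℤ :=
  sInf {d : ℤ | ∃ l, IsPartialOcc n s p gmin gmax δ j i l ∧ gammaDist s p j l = d}

lemma gammaDist_nonneg (s p : ℕ → ℤ) (j : ℕ) (l : ℕ → ℕ) :
    0 ≤ gammaDist s p j l :=
  Finset.sum_nonneg fun k _ => abs_nonneg _

lemma mrd_bddBelow (n : ℕ) (s p : ℕ → ℤ) (gmin gmax : ℕ → ℕ) (δ j i : ℕ) :
    BddBelow {d : ℤ | ∃ l, IsPartialOcc n s p gmin gmax δ j i l ∧
      gammaDist s p j l = d} := by
  refine ⟨0, fun d hd => ?_⟩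
  obtain ⟨l, _, rfl⟩ := hd
  exact gammaDist_nonneg s p j l

theorem stmt5 (n m : ℕ) (hn : 1 ≤ n) (hm : 1 ≤ m) (s p : ℕ → ℤ)
    (gmin gmax : ℕ → ℕ) (δ γ : ℕ)
    (j i : ℕ) (hj2 : 2 ≤ j) (hjm : j ≤ m) (hi1 : 1 ≤ i) (hin : i ≤ n)
    (hex : ∃ l, IsPartialOcc n s p gmin gmax δ j i l)
    (d : ℕ) (hM : Mrd n s p gmin gmax δ j i ≤ (d : ℤ)) :
    ∃ r, r < i ∧ 1 ≤ r ∧ r ≤ n ∧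
      (gmin (j - 1) : ℤ) ≤ (i : ℤ) - (r : ℤ) - 1 ∧
      (i : ℤ) - (r : ℤ) - 1 ≤ (gmax (j - 1) : ℤ) ∧
      (∃ l, IsPartialOcc n s p gmin gmax δ (j - 1) r l) ∧
      Mrd n s p gmin gmax δ (j - 1) r ≤ (d : ℤ) - |s i - p j| := by
  -- the set for (j, i) is nonempty, so sInf is attained
  obtain ⟨l0, hl0⟩ := hex
  have hne : {d : ℤ | ∃ l, IsPartialOcc n s p gmin gmax δ j i l ∧
      gammaDist s p j l = d}.Nonempty := ⟨_, l0, hl0, rfl⟩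
  have hmem := Int.csInf_mem hne (mrd_bddBelow n s p gmin gmax δ j i)
  obtain ⟨l, hl, hval⟩ := hmem
  obtain ⟨hrange, hmono, hend, hgap, hδ⟩ := hl
  have hj1 : 1 ≤ j - 1 := by omega
  have hj1j : j - 1 < j := by omega
  have hsucc : j - 1 + 1 = j := by omega
  set r := l (j - 1) with hr
  have hri : r < i := by
    have := hmono (j - 1) hj1 hj1j
    rw [hsucc, hend] at this; exact this
  have hrn := hrange (j - 1) hj1 (le_of_lt hj1j)
  have hgapj := hgap (j - 1) hj1 hj1j
  rw [hsucc, hend] at hgapj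
  refine ⟨r, hri, hrn.1, hrn.2, hgapj.1, hgapj.2, ?_, ?_⟩
  · exact ⟨l, fun k h1 h2 => hrange k h1 (by omega),
      fun k h1 h2 => hmono k h1 (by omega), rfl,
      fun k h1 h2 => hgap k h1 (by omega),
      fun k h1 h2 => hδ k h1 (by omega)⟩
  · -- Mrd (j-1) r ≤ gammaDist (j-1) l = gammaDist j l - |s i - p j|
    have hsplit : gammaDist s p j l = gammaDist s p (j - 1) l + |s i - p j| := by
      unfold gammaDist
      rw [← hsucc, Finset.sum_Icc_succ_top (by omega : 1 ≤ j - 1 + 1)]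
      rw [hsucc, hend]
    have hle : Mrd n s p gmin gmax δ (j - 1) r ≤ gammaDist s p (j - 1) l := by
      apply csInf_le (mrd_bddBelow n s p gmin gmax δ (j - 1) r)
      exact ⟨l, ⟨fun k h1 h2 => hrange k h1 (by omega),
        fun k h1 h2 => hmono k h1 (by omega), rfl,
        fun k h1 h2 => hgap k h1 (by omega),
        fun k h1 h2 => hδ k h1 (by omega)⟩, rfl⟩
    have : gammaDist s p (j - 1) l = gammaDist s p j l - |s i - p j| := by omega
    rw [this] at hle
    have hMj : gammaDist s p j l ≤ (d : ℤ) := by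
      unfold Mrd at hM; omega
    omega
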